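/- Let a, b ∈ ℝ with b² = 3a², let S₀ := diag(a + ib, −2a, a − ib) ∈ Mat₃(ℂ), let S ∈ Mat₆(ℂ) be the block-diagonal matrix with 3×3 blocks S₀ and conj(S₀), and let Ŝ := −S̄ (the negative of the entrywise complex conjugate of S). Then for all A, B ∈ 𝔫 one has K( A·S − S·A, B·Ŝ − Ŝ·B ) = 12·a²·K(A,B). -/

import Mathlib

/-!
Both `S` and `Ŝ` are diagonal, so `[A, S]ᵢⱼ = Aᵢⱼ (Dⱼ - Dᵢ)` and `[B, Ŝ]ⱼᵢ = Bⱼᵢ (conj Dⱼ - conj Dᵢ)`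
for the diagonal `D` of `S`; hence the trace of their product is `∑ |Dⱼ - Dᵢ|² Aᵢⱼ Bⱼᵢ`.
The entries of `D` are the three values `a + ib, -2a, a - ib`, any two distinct of which are at
squared distance `9a² + b² = 4b² = 12a²`, and every entry of a matrix in `𝔫` sits at a position
`(i, j)` where `Dᵢ` and `Dⱼ` are different values, which gives the factor `12a²`.
-/

open Matrix

/-- The form `K(V,W) = ½·Re tr(V·W)`. -/
noncomputable def Kform (V W : Matrix (Fin 3 ⊕ Fin 3) (Fin 3 ⊕ Fin 3) ℂ) : ℝ :=
  (Matrix.trace (V * W)).re / 2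

/-- `ν(z₁,z₂,s₁,s₂,y₁,y₂,y₃)`: the block matrix `[[X, −Y],[Ȳ, X̄]]` with
`X` having rows `(0, z₁, is₁)`, `(z₂, 0, −conj z₁)`, `(is₂, −conj z₂, 0)` and
`Y` having rows `(y₁, y₂, 0)`, `(y₃, 0, y₂)`, `(0, y₃, y₁)`. -/
noncomputable def nuMat (z₁ z₂ : ℂ) (s₁ s₂ : ℝ) (y₁ y₂ y₃ : ℂ) :
    Matrix (Fin 3 ⊕ Fin 3) (Fin 3 ⊕ Fin 3) ℂ :=
  Matrix.fromBlocks
    (!![0, z₁, Complex.I * (s₁ : ℂ);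
        z₂, 0, -(starRingEnd ℂ) z₁;
        Complex.I * (s₂ : ℂ), -(starRingEnd ℂ) z₂, 0])
    (-(!![y₁, y₂, 0; y₃, 0, y₂; 0, y₃, y₁]))
    ((!![y₁, y₂, 0; y₃, 0, y₂; 0, y₃, y₁]).map (starRingEnd ℂ))
    ((!![0, z₁, Complex.I * (s₁ : ℂ);
        z₂, 0, -(starRingEnd ℂ) z₁;
        Complex.I * (s₂ : ℂ), -(starRingEnd ℂ) z₂, 0]).map (starRingEnd ℂ))

open ComplexConjugate

namespace Matrix

variable {n R : Type*} [Fintype n] [DecidableEq n] [CommRing R]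

theorem mul_diagonal_sub_diagonal_mul (A : Matrix n n R) (D : n → R) :
    A * diagonal D - diagonal D * A = of fun i j => A i j * (D j - D i) := by
  ext i j
  simp only [sub_apply, mul_diagonal, diagonal_mul, of_apply]
  ring

theorem trace_commutator_diagonal_mul_commutator_diagonal (A B : Matrix n n R) (D E : n → R)
    (c : R) (h : ∀ i j, A i j ≠ 0 → (D j - D i) * (E i - E j) = c) :
    trace ((A * diagonal D - diagonal D * A) * (B * diagonal E - diagonal E * B)) =
      c * trace (A * B) := by
  simp only [mul_diagonal_sub_diagonal_mul, trace, diag, mul_apply, of_apply, Finset.mul_sum]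
  refine Finset.sum_congr rfl fun i _ => Finset.sum_congr rfl fun j _ => ?_
  by_cases hA : A i j = 0
  · simp [hA]
  · linear_combination (A i j * B j i) * h i j hA

end Matrix

noncomputable def s0Diag (a b : ℝ) : Fin 3 → ℂ :=
  ![(a : ℂ) + (b : ℂ) * Complex.I, -2 * (a : ℂ), (a : ℂ) - (b : ℂ) * Complex.I]

/-- Conjugation reverses `s0Diag`, so `diag(S₀, conj S₀)` has diagonal `s0Diag ∘ blockIdx`. -/
def blockIdx : Fin 3 ⊕ Fin 3 → Fin 3 :=
  Sum.elim id Fin.rev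

lemma conj_s0Diag (a b : ℝ) (k : Fin 3) : conj (s0Diag a b k) = s0Diag a b k.rev := by
  fin_cases k <;> simp [s0Diag, Fin.rev, sub_eq_add_neg, map_ofNat]

lemma fromBlocks_s0Diag (a b : ℝ) :
    fromBlocks (diagonal (s0Diag a b)) 0 0 ((diagonal (s0Diag a b)).map conj) =
      diagonal (s0Diag a b ∘ blockIdx) := by
  rw [diagonal_map (map_zero _), fromBlocks_diagonal]
  congr 1
  ext (k | k) <;> simp [blockIdx, conj_s0Diag]

lemma normSq_s0Diag_sub {a b : ℝ} (hb : b ^ 2 = 3 * a ^ 2) {k l : Fin 3} (hkl : k ≠ l) :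
    Complex.normSq (s0Diag a b l - s0Diag a b k) = 12 * a ^ 2 := by
  fin_cases k <;> fin_cases l <;> simp_all [s0Diag, Complex.normSq_apply] <;>
    first | linear_combination hb | linear_combination 4 * hb

lemma nuMat_apply_eq_zero_of_blockIdx_eq (z₁ z₂ : ℂ) (s₁ s₂ : ℝ) (y₁ y₂ y₃ : ℂ)
    {i j : Fin 3 ⊕ Fin 3} (h : blockIdx i = blockIdx j) : nuMat z₁ z₂ s₁ s₂ y₁ y₂ y₃ i j = 0 := by
  rcases i with i | i <;> rcases j with j | j <;> fin_cases i <;> fin_cases j <;>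
    simp_all [blockIdx, nuMat, Fin.rev]

/-- For `b² = 3a²`, `S₀ = diag(a+ib, −2a, a−ib)`,
`S = diag(S₀, conj S₀)` and `Ŝ = −S̄`, one has
`K([A,S], [B,Ŝ]) = 12a²·K(A,B)` for all `A, B ∈ 𝔫`. -/
theorem stmt19 (a b : ℝ) (hb : b ^ 2 = 3 * a ^ 2)
    (S₀ : Matrix (Fin 3) (Fin 3) ℂ)
    (hS₀ : S₀ = Matrix.diagonal ![(a : ℂ) + (b : ℂ) * Complex.I, -2 * (a : ℂ),
      (a : ℂ) - (b : ℂ) * Complex.I])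
    (S Shat : Matrix (Fin 3 ⊕ Fin 3) (Fin 3 ⊕ Fin 3) ℂ)
    (hS : S = Matrix.fromBlocks S₀ 0 0 (S₀.map (starRingEnd ℂ)))
    (hShat : Shat = -(S.map (starRingEnd ℂ)))
    (nset : Set (Matrix (Fin 3 ⊕ Fin 3) (Fin 3 ⊕ Fin 3) ℂ))
    (hnset : nset = {W | ∃ (z₁ z₂ : ℂ) (s₁ s₂ : ℝ) (y₁ y₂ y₃ : ℂ),
      W = nuMat z₁ z₂ s₁ s₂ y₁ y₂ y₃}) :
    ∀ A ∈ nset, ∀ B ∈ nset,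
      Kform (A * S - S * A) (B * Shat - Shat * B) = 12 * a ^ 2 * Kform A B := by
  subst hnset
  set D := s0Diag a b ∘ blockIdx
  have hSD : S = diagonal D := by rw [hS, hS₀]; exact fromBlocks_s0Diag a b
  have hShatD : Shat = diagonal fun i => -conj (D i) := by
    rw [hShat, hSD, diagonal_map (map_zero _), diagonal_neg]
  rintro A ⟨z₁, z₂, s₁, s₂, y₁, y₂, y₃, rfl⟩ B -
  have hfactor : ∀ i j, nuMat z₁ z₂ s₁ s₂ y₁ y₂ y₃ i j ≠ 0 →
      (D j - D i) * (-conj (D i) - -conj (D j)) = ((12 * a ^ 2 : ℝ) : ℂ) := by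
    intro i j hij
    have hidx : blockIdx i ≠ blockIdx j := fun h =>
      hij (nuMat_apply_eq_zero_of_blockIdx_eq _ _ _ _ _ _ _ h)
    calc (D j - D i) * (-conj (D i) - -conj (D j)) = Complex.normSq (D j - D i) := by
          rw [← Complex.mul_conj, map_sub]; ring
      _ = ((12 * a ^ 2 : ℝ) : ℂ) := by exact_mod_cast normSq_s0Diag_sub hb hidx
  rw [Kform, Kform, hSD, hShatD,
    trace_commutator_diagonal_mul_commutator_diagonal _ _ _ _ _ hfactor, Complex.re_ofReal_mul]
  ring
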